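/- (Theorem 2, Construction II rate: closed form and growth.) For every integer k ≥ 0, σ(k) = R(ψ,g,k), where R(ψ,g,k) = R₁(ψ,g,k) for k ≤ L₁(ψ,g) and R(ψ,g,k) = R₂(R₁(ψ,g,L₁(ψ,g)), g, k − L₁(ψ,g)) for k > L₁(ψ,g). Moreover the sequence σ(k) is strictly increasing in k and σ(k) → ∞ as k → ∞. -/

import Mathlib

/-!
While `σ(k) < 1/2` the recursion is the affine doubling map, whose fixed point is `1/2 − g`,
so `σ(k) = R₁(ψ,g,k)`; `L₁` is exactly the first index at which `R₁` reaches `1/2`, and from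
then on `σ` grows by `g` per step. Monotonicity needs no closed form: each step adds either `g`
or `σ(k) − (1/2 − g)`, and both stay positive because `σ` starts above `1/2 − g`.
-/

/-- The paper's `int[x]`: the smallest nonnegative integer `≥ x`. -/
noncomputable def intLe (x : ℝ) : ℕ := sInf {k : ℕ | x ≤ (k : ℝ)}

noncomputable def sigmaSeq (g ψ : ℝ) : ℕ → ℝ
  | 0 => ψ
  | k + 1 =>
    if sigmaSeq g ψ k < 1 / 2 then 2 * sigmaSeq g ψ k - (1 / 2 - g)
    else sigmaSeq g ψ k + g

noncomputable def R1 (ψ g : ℝ) (k : ℕ) : ℝ := (1 / 2 - g) + 2 ^ k * (ψ + g - 1 / 2)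

noncomputable def L1 (ψ g : ℝ) : ℕ :=
  intLe (Real.log (g / (g + ψ - 1 / 2)) / Real.log 2)

noncomputable def R2 (x g : ℝ) (k : ℕ) : ℝ := k * g + x

noncomputable def Rclosed (ψ g : ℝ) (k : ℕ) : ℝ :=
  if k ≤ L1 ψ g then R1 ψ g k
  else R2 (R1 ψ g (L1 ψ g)) g (k - L1 ψ g)

theorem le_intLe (x : ℝ) : x ≤ intLe x :=
  Nat.sInf_mem (exists_nat_ge x)

theorem intLe_le_iff {x : ℝ} {k : ℕ} : intLe x ≤ k ↔ x ≤ k :=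
  ⟨fun h => (le_intLe x).trans (by exact_mod_cast h), fun h => Nat.sInf_le h⟩

section sigmaSeq

variable {g ψ : ℝ}

theorem L1_le_iff (hg : 0 < g) (hψ : 1 / 2 - g < ψ) {k : ℕ} :
    L1 ψ g ≤ k ↔ 1 / 2 ≤ R1 ψ g k := by
  have ha : 0 < g + ψ - 1 / 2 := by linarith
  have hlog2 : 0 < Real.log 2 := Real.log_pos one_lt_two
  rw [L1, intLe_le_iff, div_le_iff₀ hlog2, ← Real.log_pow,
    Real.log_le_log_iff (by positivity) (by positivity), div_le_iff₀ ha, R1]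
  constructor <;> intro h <;> linarith

theorem sigmaSeq_succ_of_lt {k : ℕ} (h : sigmaSeq g ψ k < 1 / 2) :
    sigmaSeq g ψ (k + 1) = 2 * sigmaSeq g ψ k - (1 / 2 - g) := by
  rw [sigmaSeq, if_pos h]

theorem sigmaSeq_succ_of_le {k : ℕ} (h : 1 / 2 ≤ sigmaSeq g ψ k) :
    sigmaSeq g ψ (k + 1) = sigmaSeq g ψ k + g := by
  rw [sigmaSeq, if_neg (not_lt.mpr h)]

theorem sigmaSeq_eq_R1_of_forall_lt {k : ℕ} (h : ∀ j < k, R1 ψ g j < 1 / 2) :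
    sigmaSeq g ψ k = R1 ψ g k := by
  induction k with
  | zero => simp only [sigmaSeq, R1, pow_zero]; ring
  | succ n ih =>
    have hn : sigmaSeq g ψ n = R1 ψ g n := ih fun j hj => h j (by omega)
    rw [sigmaSeq_succ_of_lt (hn ▸ h n n.lt_succ_self), hn, R1, R1, pow_succ]
    ring

theorem sigmaSeq_add_of_half_le (hg : 0 ≤ g) {n : ℕ} (h : 1 / 2 ≤ sigmaSeq g ψ n) (j : ℕ) :
    sigmaSeq g ψ (n + j) = sigmaSeq g ψ n + j * g := by
  induction j with
  | zero => simp
  | succ j ih =>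
    have hj : 1 / 2 ≤ sigmaSeq g ψ (n + j) := by
      rw [ih]; nlinarith [(j.cast_nonneg : (0 : ℝ) ≤ j)]
    rw [← add_assoc, sigmaSeq_succ_of_le hj, ih]
    push_cast
    ring

theorem sigmaSeq_lt_succ (hg : 0 < g) {k : ℕ} (h : 1 / 2 - g < sigmaSeq g ψ k) :
    sigmaSeq g ψ k < sigmaSeq g ψ (k + 1) := by
  rcases lt_or_ge (sigmaSeq g ψ k) (1 / 2) with hlt | hge
  · rw [sigmaSeq_succ_of_lt hlt]; linarith
  · rw [sigmaSeq_succ_of_le hge]; linarith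

theorem sub_lt_sigmaSeq (hg : 0 < g) (hψ : 1 / 2 - g < ψ) (k : ℕ) :
    1 / 2 - g < sigmaSeq g ψ k := by
  induction k with
  | zero => exact hψ
  | succ k ih => exact ih.trans (sigmaSeq_lt_succ hg ih)

theorem sigmaSeq_strictMono (hg : 0 < g) (hψ : 1 / 2 - g < ψ) : StrictMono (sigmaSeq g ψ) :=
  strictMono_nat_of_lt_succ fun k => sigmaSeq_lt_succ hg (sub_lt_sigmaSeq hg hψ k)

theorem sigmaSeq_eq_R1 (hg : 0 < g) (hψ : 1 / 2 - g < ψ) {k : ℕ} (hk : k ≤ L1 ψ g) :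
    sigmaSeq g ψ k = R1 ψ g k :=
  sigmaSeq_eq_R1_of_forall_lt fun j hj =>
    not_le.mp fun h => absurd ((L1_le_iff hg hψ).mpr h) (by omega)

theorem sigmaSeq_L1_add (hg : 0 < g) (hψ : 1 / 2 - g < ψ) (j : ℕ) :
    sigmaSeq g ψ (L1 ψ g + j) = R1 ψ g (L1 ψ g) + j * g := by
  have hL1 : sigmaSeq g ψ (L1 ψ g) = R1 ψ g (L1 ψ g) := sigmaSeq_eq_R1 hg hψ le_rfl
  have hhalf : 1 / 2 ≤ sigmaSeq g ψ (L1 ψ g) := hL1 ▸ (L1_le_iff hg hψ).mp le_rfl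
  rw [sigmaSeq_add_of_half_le hg.le hhalf, hL1]

theorem sigmaSeq_eq_Rclosed (hg : 0 < g) (hψ : 1 / 2 - g < ψ) (k : ℕ) :
    sigmaSeq g ψ k = Rclosed ψ g k := by
  rw [Rclosed]
  split_ifs with hk
  · exact sigmaSeq_eq_R1 hg hψ hk
  · rw [← Nat.add_sub_of_le (not_le.mp hk).le, sigmaSeq_L1_add hg hψ, Nat.add_sub_cancel_left,
      R2, add_comm]

theorem sigmaSeq_tendsto_atTop (hg : 0 < g) (hψ : 1 / 2 - g < ψ) :
    Filter.Tendsto (sigmaSeq g ψ) Filter.atTop Filter.atTop := by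
  rw [← Filter.tendsto_add_atTop_iff_nat (L1 ψ g)]
  simp only [add_comm _ (L1 ψ g), sigmaSeq_L1_add hg hψ]
  exact Filter.tendsto_atTop_add_const_left _ _
    (tendsto_natCast_atTop_atTop.atTop_mul_const hg)

end sigmaSeq

theorem sigmaSeq_closed_form_general (g ψ : ℝ) (hg1 : 1 / 4 < g)
    (hψ1 : 1 / 2 - g < ψ) :
    (∀ k : ℕ, sigmaSeq g ψ k = Rclosed ψ g k) ∧
    StrictMono (sigmaSeq g ψ) ∧
    Filter.Tendsto (sigmaSeq g ψ) Filter.atTop Filter.atTop := by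
  have hg : 0 < g := by linarith
  exact ⟨sigmaSeq_eq_Rclosed hg hψ1, sigmaSeq_strictMono hg hψ1, sigmaSeq_tendsto_atTop hg hψ1⟩

/-- For `1/4 < g ≤ 1/2` and `1/2 − g < ψ ≤ 1/2`: `σ(k) = R(ψ,g,k)` for
every `k`, `σ` is strictly increasing, and `σ(k) → ∞`. -/
theorem sigmaSeq_closed_form (g ψ : ℝ) (hg1 : 1 / 4 < g) (hg2 : g ≤ 1 / 2)
    (hψ1 : 1 / 2 - g < ψ) (hψ2 : ψ ≤ 1 / 2) :
    (∀ k : ℕ, sigmaSeq g ψ k = Rclosed ψ g k) ∧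
    StrictMono (sigmaSeq g ψ) ∧
    Filter.Tendsto (sigmaSeq g ψ) Filter.atTop Filter.atTop :=
  sigmaSeq_closed_form_general g ψ hg1 hψ1
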